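/- arXiv:2306.14867 — 3 statements merged into one kernel-verified Lean document; each statement's English description precedes it below -/
import Mathlib

section
/- Let f(x) = λ/(1+x)^(Δ-1) with integer Δ ≥ 2 and 0 < λ ≤ 1/(Δ^k (Δ-1)) for some real k > 0. If x̂ > 0 is the fixed point of f, then |f'(x̂)| < Δ^(-k). -/
/-- for f(x) = λ(1+x)^(-(Δ-1)) with 0 < λ ≤ 1/(Δ^k (Δ-1)), k > 0,
Δ ≥ 2, if x̂ > 0 is the fixed point (x̂(1+x̂)^(Δ-1) = λ) then
|f'(x̂)| = (Δ-1)λ/(1+x̂)^Δ < Δ^(-k). -/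
theorem stmt_1 (Δ : ℕ) (hΔ : 2 ≤ Δ) (k : ℝ) (hk : 0 < k) (lam : ℝ) (hlam : 0 < lam)
    (hlam' : lam ≤ 1 / ((Δ : ℝ) ^ k * ((Δ : ℝ) - 1)))
    (x : ℝ) (hx : 0 < x) (hfix : x * (1 + x) ^ (Δ - 1) = lam) :
    |(-(((Δ : ℝ) - 1) * lam / (1 + x) ^ Δ))| < (Δ : ℝ) ^ (-k) := by
  have hΔ1 : (2:ℝ) ≤ (Δ:ℝ) := by exact_mod_cast hΔ
  have hD : (0:ℝ) < (Δ:ℝ) - 1 := by linarith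
  have hΔ0 : (0:ℝ) < (Δ:ℝ) := by linarith
  have hpk : (0:ℝ) < (Δ:ℝ) ^ k := Real.rpow_pos_of_pos hΔ0 k
  have hp : 1 < (1 + x) ^ Δ :=
    one_lt_pow₀ (by linarith) (by omega)
  have hpos : 0 < ((Δ:ℝ) - 1) * lam := mul_pos hD hlam
  rw [abs_neg, abs_of_pos (div_pos hpos (by linarith))]
  have h1 : ((Δ:ℝ) - 1) * lam / (1 + x) ^ Δ < ((Δ:ℝ) - 1) * lam := by
    rw [div_lt_iff₀ (by linarith)]
    nlinarith
  have h2 : ((Δ:ℝ) - 1) * lam ≤ (Δ:ℝ) ^ (-k) := by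
    rw [Real.rpow_neg hΔ0.le]
    have := mul_le_mul_of_nonneg_left hlam' hD.le
    calc ((Δ:ℝ) - 1) * lam ≤ ((Δ:ℝ) - 1) * (1 / ((Δ:ℝ) ^ k * ((Δ:ℝ) - 1))) := this
      _ = ((Δ:ℝ) ^ k)⁻¹ := by field_simp
  linarith
end

section
/- Let (Xₜ) be the Markov chain on ℤ≥0 with X₀ = 1, absorbing at 0, which from state x > 0 moves to x + (Δ−1) with probability p = λ/(1+λ) and to x − 1 with probability 1 − p, where λ < 1/(Δ−1) and Δ ≥ 2. Then for any 0 < ε < 1 and T = ⌈(2Δ²/(1 − pΔ)²) · log(1/ε)⌉, the probability that X_T > 0 is at most ε. -/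
/-!
Until it is absorbed, the walk equals `1 + ξ₀ + ⋯ + ξ_{t-1}`, so `X_T > 0` forces the sum of the
first `T` increments to be nonnegative. The increments are independent, take values in an
interval of length `Δ` and have mean `pΔ - 1 = -δ < 0`, so Hoeffding's inequality bounds the
probability that their sum exceeds its mean by `Tδ` by `exp (-2Tδ² / Δ²)`, which is at most `ε`
for the given `T`.
-/
open MeasureTheory ProbabilityTheory

section Hoeffding

variable {Ω : Type*} [MeasurableSpace Ω] {μ : Measure Ω}

theorem measureReal_le_sum_range_le_exp {Z : ℕ → Ω → ℝ} (hindep : iIndepFun Z μ)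
    (hmeas : ∀ i, Measurable (Z i)) {a b m : ℝ} (hbd : ∀ i, ∀ᵐ ω ∂μ, Z i ω ∈ Set.Icc a b)
    (hmean : ∀ i, μ[Z i] = m) (n : ℕ) {r : ℝ} (hr : 0 ≤ r) :
    μ.real {ω | n * m + r ≤ ∑ i ∈ Finset.range n, Z i ω}
      ≤ Real.exp (-(2 * r ^ 2 / (n * (b - a) ^ 2))) := by
  have := hindep.isProbabilityMeasure
  have hcentered : iIndepFun (fun i ω ↦ Z i ω - m) μ :=
    hindep.comp (fun _ x ↦ x - m) fun _ ↦ measurable_id.sub_const m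
  have hsubG : ∀ i < n, HasSubgaussianMGF (fun ω ↦ Z i ω - m) ((‖b - a‖₊ / 2) ^ 2) μ :=
    fun i _ ↦ hmean i ▸ hasSubgaussianMGF_of_mem_Icc (hmeas i).aemeasurable (hbd i)
  have hset : {ω | n * m + r ≤ ∑ i ∈ Finset.range n, Z i ω}
      = {ω | r ≤ ∑ i ∈ Finset.range n, (Z i ω - m)} := by
    ext ω
    simp only [Set.mem_ofPred_eq, Finset.sum_sub_distrib, Finset.sum_const, Finset.card_range,
      nsmul_eq_mul]
    constructor <;> intro h <;> linarith
  rw [hset]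
  refine (HasSubgaussianMGF.measure_sum_range_ge_le_of_iIndepFun hcentered hsubG hr).trans_eq ?_
  congr 1
  simp only [NNReal.coe_pow, NNReal.coe_div, coe_nnnorm, Real.norm_eq_abs, NNReal.coe_ofNat]
  rw [div_pow, sq_abs, show (2 : ℝ) * n * ((b - a) ^ 2 / 2 ^ 2) = n * (b - a) ^ 2 / 2 by ring,
    div_div_eq_mul_div]
  ring

end Hoeffding

section TwoPointLaw

variable {Ω α : Type*} [MeasurableSpace Ω] {μ : Measure Ω} [IsProbabilityMeasure μ]
  [MeasurableSpace α] [MeasurableSingletonClass α] {ξ : Ω → α} {a b : α} {p : ℝ}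

theorem ae_eq_or_eq_of_measure_eq_ofReal (hξ : Measurable ξ) (hab : a ≠ b) (hp0 : 0 ≤ p)
    (hp1 : p ≤ 1) (ha : μ {ω | ξ ω = a} = ENNReal.ofReal p)
    (hb : μ {ω | ξ ω = b} = ENNReal.ofReal (1 - p)) :
    ∀ᵐ ω ∂μ, ξ ω = a ∨ ξ ω = b := by
  have hdisj : Disjoint {ω | ξ ω = a} {ω | ξ ω = b} :=
    Set.disjoint_left.2 fun _ ha hb ↦ hab (ha.symm.trans hb)
  have hA : MeasurableSet {ω | ξ ω = a} := hξ (measurableSet_singleton a)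
  have hB : MeasurableSet {ω | ξ ω = b} := hξ (measurableSet_singleton b)
  refine ae_iff.2 ((prob_compl_eq_zero_iff (hA.union hB)).2 ?_)
  rw [measure_union hdisj hB, ha, hb, ← ENNReal.ofReal_add hp0 (sub_nonneg.2 hp1)]
  simp

theorem integral_comp_eq_of_measure_eq_ofReal (hξ : Measurable ξ) (hab : a ≠ b) (hp0 : 0 ≤ p)
    (hp1 : p ≤ 1) (ha : μ {ω | ξ ω = a} = ENNReal.ofReal p)
    (hb : μ {ω | ξ ω = b} = ENNReal.ofReal (1 - p)) (f : α → ℝ) :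
    ∫ ω, f (ξ ω) ∂μ = p * f a + (1 - p) * f b := by
  have hA : MeasurableSet {ω | ξ ω = a} := hξ (measurableSet_singleton a)
  have hB : MeasurableSet {ω | ξ ω = b} := hξ (measurableSet_singleton b)
  have hsplit : (fun ω ↦ f (ξ ω)) =ᵐ[μ]
      fun ω ↦ {ω | ξ ω = a}.indicator (fun _ ↦ f a) ω + {ω | ξ ω = b}.indicator (fun _ ↦ f b) ω := by
    filter_upwards [ae_eq_or_eq_of_measure_eq_ofReal hξ hab hp0 hp1 ha hb] with ω hω
    rcases hω with hω | hω <;> simp [Set.indicator, hω, hab, hab.symm]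
  rw [integral_congr_ae hsplit, integral_add ((integrable_const _).indicator hA)
    ((integrable_const _).indicator hB), integral_indicator_const _ hA,
    integral_indicator_const _ hB, smul_eq_mul, smul_eq_mul, measureReal_def, measureReal_def,
    ha, hb, ENNReal.toReal_ofReal hp0, ENNReal.toReal_ofReal (sub_nonneg.2 hp1)]

end TwoPointLaw

section AbsorbedWalk

variable {X ξ : ℕ → ℤ}

theorem nonneg_of_absorbed_step (h0 : 0 ≤ X 0)
    (hstep : ∀ t, X (t + 1) = if X t = 0 then 0 else X t + ξ t) (hξ : ∀ t, -1 ≤ ξ t) (t : ℕ) :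
    0 ≤ X t := by
  induction t with
  | zero => exact h0
  | succ t ih =>
    rw [hstep]
    split_ifs with hzero
    · rfl
    · have := hξ t
      omega

theorem eq_add_sum_of_absorbed_step_of_pos (h0 : 0 ≤ X 0)
    (hstep : ∀ t, X (t + 1) = if X t = 0 then 0 else X t + ξ t) (hξ : ∀ t, -1 ≤ ξ t) {t : ℕ}
    (ht : 0 < X t) : X t = X 0 + ∑ j ∈ Finset.range t, ξ j := by
  induction t with
  | zero => simp
  | succ t ih =>
    rw [hstep] at ht ⊢
    split_ifs at ht ⊢ with hzero
    · exact absurd ht (lt_irrefl 0)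
    · have hpos : 0 < X t := (nonneg_of_absorbed_step h0 hstep hξ t).lt_of_ne' hzero
      rw [ih hpos, Finset.sum_range_succ, add_assoc]

theorem sum_nonneg_of_absorbed_step_of_pos (h0 : X 0 = 1)
    (hstep : ∀ t, X (t + 1) = if X t = 0 then 0 else X t + ξ t) (hξ : ∀ t, -1 ≤ ξ t) {t : ℕ}
    (ht : 0 < X t) : 0 ≤ ∑ j ∈ Finset.range t, ξ j := by
  have := eq_add_sum_of_absorbed_step_of_pos (h0 ▸ zero_le_one) hstep hξ ht
  omega

end AbsorbedWalk

theorem div_one_add_mul_lt_one {lam D : ℝ} (hlam : 0 < lam) (hD : 1 < D)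
    (h : lam < 1 / (D - 1)) : lam / (1 + lam) * D < 1 := by
  rw [lt_div_iff₀ (by linarith), mul_comm] at h
  rw [div_mul_eq_mul_div, div_lt_one (by linarith)]
  linarith

theorem exp_neg_le_of_log_inv_le {ε x : ℝ} (hε : 0 < ε) (hx : Real.log (1 / ε) ≤ x) :
    Real.exp (-x) ≤ ε := by
  rw [← Real.le_log_iff_exp_le hε]
  rw [one_div, Real.log_inv] at hx
  linarith

theorem log_one_div_le_of_le_mul_log {D δ ε : ℝ} {T : ℕ} (hD : 0 < D) (hδ : 0 < δ)
    (hε : 0 < ε) (hε1 : ε < 1) (hT : 2 * D ^ 2 / δ ^ 2 * Real.log (1 / ε) ≤ T) :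
    Real.log (1 / ε) ≤ 2 * (T * δ) ^ 2 / (T * D ^ 2) := by
  have hL : 0 < Real.log (1 / ε) := Real.log_pos ((one_lt_div hε).2 hε1)
  have hTpos : (0 : ℝ) < T := lt_of_lt_of_le (by positivity) hT
  rw [div_mul_eq_mul_div, div_le_iff₀ (by positivity)] at hT
  rw [le_div_iff₀ (by positivity)]
  nlinarith

/-- the branching random walk on ℤ≥0 with X₀ = 1, absorbing at 0,
moving +（Δ−1) w.p. p = λ/(1+λ) and −1 w.p. 1−p from positive states, where
λ < 1/(Δ−1) and Δ ≥ 2, satisfies: for T = ⌈(2Δ²/(1−pΔ)²)·log(1/ε)⌉,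
Pr[X_T > 0] ≤ ε. -/
theorem stmt_8 {Ω : Type*} [MeasureSpace Ω] [IsProbabilityMeasure (ℙ : Measure Ω)]
    (Δ : ℕ) (hΔ : 2 ≤ Δ) (lam : ℝ) (hlam : 0 < lam) (hlam' : lam < 1 / ((Δ : ℝ) - 1))
    (p : ℝ) (hp : p = lam / (1 + lam))
    (ξ : ℕ → Ω → ℤ) (hξmeas : ∀ t, Measurable (ξ t))
    (hξindep : iIndepFun ξ ℙ)
    (hξup : ∀ t, (ℙ : Measure Ω) {ω | ξ t ω = (Δ : ℤ) - 1} = ENNReal.ofReal p)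
    (hξdown : ∀ t, (ℙ : Measure Ω) {ω | ξ t ω = -1} = ENNReal.ofReal (1 - p))
    (X : ℕ → Ω → ℤ) (hX0 : ∀ ω, X 0 ω = 1)
    (hXstep : ∀ t ω, X (t + 1) ω = if X t ω = 0 then 0 else X t ω + ξ t ω)
    (ε : ℝ) (hε : 0 < ε) (hε1 : ε < 1)
    (T : ℕ) (hT : T = ⌈(2 * (Δ : ℝ) ^ 2 / (1 - p * Δ) ^ 2) * Real.log (1 / ε)⌉₊) :
    (ℙ : Measure Ω) {ω | 0 < X T ω} ≤ ENNReal.ofReal ε := by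
  have hΔR : (2 : ℝ) ≤ Δ := by exact_mod_cast hΔ
  have hp0 : 0 < p := hp ▸ by positivity
  have hp1 : p ≤ 1 := by rw [hp, div_le_one (by positivity)]; linarith
  set δ := 1 - p * Δ
  have hδ : 0 < δ := sub_pos.2 (hp ▸ div_one_add_mul_lt_one hlam (by linarith) hlam')
  have hne : (Δ : ℤ) - 1 ≠ -1 := by omega
  have htwo : ∀ t, ∀ᵐ ω ∂ℙ, ξ t ω = (Δ : ℤ) - 1 ∨ ξ t ω = -1 := fun t ↦
    ae_eq_or_eq_of_measure_eq_ofReal (hξmeas t) hne hp0.le hp1 (hξup t) (hξdown t)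
  have hmean : ∀ t, ∫ ω, (ξ t ω : ℝ) = p * Δ - 1 := fun t ↦ by
    rw [integral_comp_eq_of_measure_eq_ofReal (hξmeas t) hne hp0.le hp1 (hξup t) (hξdown t)]
    push_cast
    ring
  have hbd : ∀ t, ∀ᵐ ω ∂ℙ, (ξ t ω : ℝ) ∈ Set.Icc (-1) ((Δ : ℝ) - 1) := fun t ↦ by
    filter_upwards [htwo t] with ω hω
    rcases hω with h | h <;> simp [h]
  have hsub : {ω | 0 < X T ω} ≤ᵐ[ℙ]
      {ω | T * (p * Δ - 1) + T * δ ≤ ∑ j ∈ Finset.range T, (ξ j ω : ℝ)} := by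
    filter_upwards [ae_all_iff.2 htwo] with ω hω (hpos : 0 < X T ω)
    have : (0 : ℝ) ≤ ∑ j ∈ Finset.range T, (ξ j ω : ℝ) := by
      exact_mod_cast sum_nonneg_of_absorbed_step_of_pos (X := (X · ω)) (hX0 ω) (hXstep · ω)
        (fun t ↦ by rcases hω t with h | h <;> omega) hpos
    show _ ≤ _
    linarith
  have hlog : Real.log (1 / ε) ≤ 2 * (T * δ) ^ 2 / (T * ((Δ : ℝ) - 1 - -1) ^ 2) := by
    rw [sub_neg_eq_add, sub_add_cancel]
    exact log_one_div_le_of_le_mul_log (by positivity) hδ hε hε1 (hT ▸ Nat.le_ceil _)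
  refine (measure_mono_ae hsub).trans ?_
  rw [← ofReal_measureReal]
  exact ENNReal.ofReal_le_ofReal <| (measureReal_le_sum_range_le_exp
    (hξindep.comp (fun _ ↦ Int.cast) fun _ ↦ measurable_from_top)
    (fun t ↦ measurable_from_top.comp (hξmeas t)) hbd hmean T (by positivity)).trans
    (exp_neg_le_of_log_inv_le hε hlog)
end

section
/- Let q ≥ 1, n ≥ 1, and let Z̃₁,…,Z̃ₙ be independent random variables with values in [0,1] such that for each i, E[Z̃ᵢ] ≥ 1/(2q) and Var[Z̃ᵢ] ≤ 1/n. Then the product X = ∏ᵢ Z̃ᵢ satisfies Var[X]/(E[X])² ≤ (1 + 4q²/n)ⁿ − 1 ≤ e^{4q²} − 1. -/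
open MeasureTheory ProbabilityTheory

/-! For independent factors, `E[X²] = ∏ E[Zᵢ²]` and `E[X]² = ∏ E[Zᵢ]²`, so the relative second
moment `E[X²]/E[X]² = 1 + Var[X]/E[X]²` is multiplicative. Each factor `1 + Var[Zᵢ]/E[Zᵢ]²` is at
most `1 + (1/n)(2q)²`, and `(1 + x/n)ⁿ ≤ eˣ`. -/

lemma Real.one_add_div_pow_le_exp {n : ℕ} {x : ℝ} (hx : -n ≤ x) :
    (1 + x / n) ^ n ≤ Real.exp x := by
  convert Real.one_sub_div_pow_le_exp_neg (n := n) (t := -x) (by linarith) using 2 <;> ring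

lemma MeasureTheory.memLp_of_forall_nonneg_of_le_one {Ω : Type*} [MeasurableSpace Ω]
    {μ : Measure Ω} [IsFiniteMeasure μ] {f : Ω → ℝ} (hf : AEStronglyMeasurable f μ)
    (h : ∀ ω, 0 ≤ f ω ∧ f ω ≤ 1) (p : ENNReal) :
    MemLp f p μ :=
  MemLp.of_bound hf 1 <| ae_of_all _ fun ω => by
    rw [Real.norm_eq_abs, abs_of_nonneg (h ω).1]; exact (h ω).2

namespace ProbabilityTheory

variable {Ω ι : Type*} [MeasurableSpace Ω] {μ : Measure Ω} [IsProbabilityMeasure μ] [Fintype ι]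
  {X : ι → Ω → ℝ}

lemma iIndepFun.variance_fun_prod (hX : iIndepFun X μ) (hm : ∀ i, AEStronglyMeasurable (X i) μ)
    (hL : MemLp (fun ω => ∏ i, X i ω) 2 μ) :
    variance (fun ω => ∏ i, X i ω) μ = ∏ i, μ[X i ^ 2] - (∏ i, μ[X i]) ^ 2 := by
  have hX2 : iIndepFun (fun i ω => X i ω ^ 2) μ :=
    hX.comp (fun _ x => x ^ 2) fun _ => measurable_id.pow_const 2
  have hsq := hX2.integral_fun_prod_eq_prod_integral fun i => (hm i).pow 2
  rw [variance_eq_sub hL, hX.integral_fun_prod_eq_prod_integral hm]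
  simp only [Pi.pow_apply, Finset.prod_pow] at hsq ⊢
  rw [hsq]

lemma iIndepFun.variance_fun_prod_div_sq (hX : iIndepFun X μ)
    (hLi : ∀ i, MemLp (X i) 2 μ) (hL : MemLp (fun ω => ∏ i, X i ω) 2 μ) (h0 : ∀ i, μ[X i] ≠ 0) :
    variance (fun ω => ∏ i, X i ω) μ / (μ[fun ω => ∏ i, X i ω]) ^ 2
      = ∏ i, (1 + variance (X i) μ / μ[X i] ^ 2) - 1 := by
  have hfactor : ∀ i, 1 + variance (X i) μ / μ[X i] ^ 2 = μ[X i ^ 2] / μ[X i] ^ 2 := by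
    intro i
    have hi := h0 i
    rw [variance_eq_sub (hLi i)]
    field_simp
    ring
  have hprod : (∏ i, μ[X i]) ^ 2 ≠ 0 := pow_ne_zero 2 (Finset.prod_ne_zero_iff.2 fun i _ => h0 i)
  have hm i := (hLi i).aestronglyMeasurable
  simp_rw [hfactor, hX.variance_fun_prod hm hL, hX.integral_fun_prod_eq_prod_integral hm,
    Finset.prod_div_distrib, Finset.prod_pow, sub_div, div_self hprod]

end ProbabilityTheory

theorem stmt_19_general {Ω : Type*} [MeasureSpace Ω] [IsProbabilityMeasure (ℙ : Measure Ω)]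
    (q : ℝ) (hq : 1 ≤ q) (n : ℕ)
    (Z : Fin n → Ω → ℝ) (hmeas : ∀ i, Measurable (Z i))
    (hindep : iIndepFun Z ℙ)
    (hrange : ∀ i ω, 0 ≤ Z i ω ∧ Z i ω ≤ 1)
    (hmean : ∀ i, 1 / (2 * q) ≤ ∫ ω, Z i ω)
    (hvar : ∀ i, variance (Z i) ℙ ≤ 1 / n) :
    variance (fun ω => ∏ i, Z i ω) ℙ / (∫ ω, ∏ i, Z i ω) ^ 2 ≤
      (1 + 4 * q ^ 2 / n) ^ n - 1 ∧
    ((1 + 4 * q ^ 2 / n) ^ n - 1 : ℝ) ≤ Real.exp (4 * q ^ 2) - 1 := by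
  have hq0 : 0 < q := by linarith
  have hprod_range : ∀ ω, 0 ≤ ∏ i, Z i ω ∧ ∏ i, Z i ω ≤ 1 := fun ω =>
    ⟨Finset.prod_nonneg fun i _ => (hrange i ω).1,
      Finset.prod_le_one (fun i _ => (hrange i ω).1) fun i _ => (hrange i ω).2⟩
  have hratio : ∀ i, variance (Z i) ℙ / (∫ ω, Z i ω) ^ 2 ≤ 4 * q ^ 2 / n := fun i =>
    calc variance (Z i) ℙ / (∫ ω, Z i ω) ^ 2 ≤ (1 / n) / (1 / (2 * q)) ^ 2 := by
          gcongr
          exacts [hvar i, hmean i]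
      _ = 4 * q ^ 2 / n := by field_simp; norm_num
  constructor
  · rw [hindep.variance_fun_prod_div_sq
      (fun i => memLp_of_forall_nonneg_of_le_one (hmeas i).aestronglyMeasurable (hrange i) 2)
      (memLp_of_forall_nonneg_of_le_one
        (Finset.measurable_prod _ fun i _ => hmeas i).aestronglyMeasurable hprod_range 2)
      fun i => ((one_div_pos.2 (by positivity)).trans_le (hmean i)).ne']
    gcongr
    calc ∏ i, (1 + variance (Z i) ℙ / (∫ ω, Z i ω) ^ 2) ≤ ∏ _ : Fin n, (1 + 4 * q ^ 2 / n) :=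
          Finset.prod_le_prod (fun i _ => by have := variance_nonneg (Z i) ℙ; positivity)
            fun i _ => add_le_add_right (hratio i) 1
      _ = (1 + 4 * q ^ 2 / n) ^ n := by simp
  · gcongr
    exact Real.one_add_div_pow_le_exp ((neg_nonpos.2 n.cast_nonneg).trans (by positivity))

/-- for q ≥ 1, n ≥ 1 and independent [0,1]-valued random
variables Z̃₁,…,Z̃ₙ with E[Z̃ᵢ] ≥ 1/(2q) and Var[Z̃ᵢ] ≤ 1/n, the product
X = ∏ᵢ Z̃ᵢ satisfies Var[X]/E[X]² ≤ (1 + 4q²/n)ⁿ − 1 ≤ e^{4q²} − 1. -/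
theorem stmt_19 {Ω : Type*} [MeasureSpace Ω] [IsProbabilityMeasure (ℙ : Measure Ω)]
    (q : ℝ) (hq : 1 ≤ q) (n : ℕ) (hn : 1 ≤ n)
    (Z : Fin n → Ω → ℝ) (hmeas : ∀ i, Measurable (Z i))
    (hindep : iIndepFun Z ℙ)
    (hrange : ∀ i ω, 0 ≤ Z i ω ∧ Z i ω ≤ 1)
    (hmean : ∀ i, 1 / (2 * q) ≤ ∫ ω, Z i ω)
    (hvar : ∀ i, variance (Z i) ℙ ≤ 1 / n) :
    variance (fun ω => ∏ i, Z i ω) ℙ / (∫ ω, ∏ i, Z i ω) ^ 2 ≤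
      (1 + 4 * q ^ 2 / n) ^ n - 1 ∧
    ((1 + 4 * q ^ 2 / n) ^ n - 1 : ℝ) ≤ Real.exp (4 * q ^ 2) - 1 :=
  stmt_19_general q hq n Z hmeas hindep hrange hmean hvar
end
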